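/- Let (S,*) be a ℤ₂-irreducible k-cycle for some k ≥ 1. Then |V(S)| ≥ 2k+2, with equality if and only if (S,*) is a trivial ℤ₂-irreducible k-cycle or S is isomorphic to B_k (the boundary complex of the (k+1)-dimensional crosspolytope), i.e. there is a bijection of vertex sets carrying the facets of S, with multiplicity, to the facets of B_k. -/

import Mathlib

open Matrix

/-! ### Frameworks and infinitesimal rigidity -/

/-- An infinitesimal motion of the framework given by the graph `G` restricted to the
vertex set `W`, realised by `p` in `ℝ^d`. -/
def IsMotion {V : Type*} (d : ℕ) (G : SimpleGraph V) (W : Set V)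
    (p q : V → Fin d → ℝ) : Prop :=
  ∀ u ∈ W, ∀ v ∈ W, G.Adj u v → (p u - p v) ⬝ᵥ (q u - q v) = 0

/-- A trivial infinitesimal motion: `q = S ∘ p + c` on `W` for a skew-symmetric `S`. -/
def IsTrivialMotion {V : Type*} (d : ℕ) (W : Set V) (p q : V → Fin d → ℝ) : Prop :=
  ∃ (S : Matrix (Fin d) (Fin d) ℝ) (c : Fin d → ℝ), Sᵀ = -S ∧ ∀ u ∈ W, q u = S *ᵥ p u + c

/-- The framework on vertex set `W` with edges those of `G` inside `W`, realised by `p`,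
is infinitesimally rigid. -/
def IsInfRigid {V : Type*} (d : ℕ) (G : SimpleGraph V) (W : Set V)
    (p : V → Fin d → ℝ) : Prop :=
  ∀ q : V → Fin d → ℝ, IsMotion d G W p q → IsTrivialMotion d W p q

/-- `σ` is a free involution on `X`, i.e. a vertex pairing on `X`. -/
structure IsVertexPairing {V : Type*} (X : Set V) (σ : V → V) : Prop where
  mapsTo : ∀ x ∈ X, σ x ∈ X
  invol : ∀ x ∈ X, σ (σ x) = x
  free : ∀ x ∈ X, σ x ≠ x

/-- A non-adjacent vertex pairing of the graph `G`. -/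
def IsNonAdjPairing {V : Type*} (G : SimpleGraph V) (X : Set V) (σ : V → V) : Prop :=
  IsVertexPairing X σ ∧ ∀ x ∈ X, ¬ G.Adj x (σ x)

/-- `(G, σ)` is a `ℤ₂`-symmetric graph: `σ` is a free involutive automorphism of `G`
with `u (σ u)` never an edge. -/
def IsZ2SymGraph {V : Type*} (G : SimpleGraph V) (σ : V → V) : Prop :=
  (∀ x, σ (σ x) = x) ∧ (∀ x, σ x ≠ x) ∧ (∀ u v, G.Adj u v ↔ G.Adj (σ u) (σ v)) ∧
    ∀ x, ¬ G.Adj x (σ x)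

/-- `γ` generates a point group of `ℝ^d` of order two: it is orthogonal, an involution
and not the identity. -/
def IsPointGroupInvolution {d : ℕ} (γ : Matrix (Fin d) (Fin d) ℝ) : Prop :=
  γᵀ * γ = 1 ∧ γ * γ = 1 ∧ γ ≠ 1

/-- The diagonal matrix `I_{t,d}` whose first `t` diagonal entries are `1` and whose
remaining `d - t` diagonal entries are `-1`; it generates the point group `Γ_{t,d}`. -/
def Itd (t d : ℕ) : Matrix (Fin d) (Fin d) ℝ :=
  Matrix.diagonal fun i => if (i : ℕ) < t then (1 : ℝ) else -1

/-- `p` is `Γ`-symmetric with respect to the vertex pairing `σ : X → X`, where `Γ` is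
generated by `γ`. -/
def IsGammaSym {V : Type*} {d : ℕ} (X : Set V) (σ : V → V)
    (γ : Matrix (Fin d) (Fin d) ℝ) (p : V → Fin d → ℝ) : Prop :=
  ∀ x ∈ X, p (σ x) = γ *ᵥ p x

/-- `(G|_W, σ)` is `Γ`-rigid in `ℝ^d`, where `Γ` is the point group generated by `γ`:
some `Γ`-symmetric realisation is infinitesimally rigid. -/
def GammaRigid {V : Type*} (d : ℕ) (G : SimpleGraph V) (W X : Set V) (σ : V → V)
    (γ : Matrix (Fin d) (Fin d) ℝ) : Prop :=
  ∃ p : V → Fin d → ℝ, IsGammaSym X σ γ p ∧ IsInfRigid d G W p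

/-- The set `X_W = (X ∩ W) ∩ (X ∩ W)*`. -/
def pairedPart {V : Type*} (X : Set V) (σ : V → V) (W : Set V) : Set V :=
  (X ∩ W) ∩ (σ '' (X ∩ W))

/-- The simple graph `G/uv` obtained from `G` by contracting `v` onto `u`. -/
def contractEdge {V : Type*} (G : SimpleGraph V) (u v : V) : SimpleGraph V :=
  SimpleGraph.fromRel fun a b =>
    a ≠ v ∧ b ≠ v ∧ (G.Adj a b ∨ (a = u ∧ G.Adj v b) ∨ (b = u ∧ G.Adj a v))

/-- The row of the rigidity matrix indexed by an (unordered) edge `e`, viewed as the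
linear functional `q ↦ (p u - p v) ⬝ᵥ (q u - q v)`. -/
def rigidityRow {V : Type*} (d : ℕ) (p : V → Fin d → ℝ) (e : Sym2 V)
    (q : V → Fin d → ℝ) : ℝ :=
  Sym2.lift ⟨fun u v => (p u - p v) ⬝ᵥ (q u - q v), fun u v => by
    show (p u - p v) ⬝ᵥ (q u - q v) = (p v - p u) ⬝ᵥ (q v - q u)
    rw [show p u - p v = -(p v - p u) from (neg_sub _ _).symm,
      show q u - q v = -(q v - q u) from (neg_sub _ _).symm,
      neg_dotProduct, dotProduct_neg, neg_neg]⟩ e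

/-- The rigidity matrix `R(G,p)` is row-independent. -/
def RowIndependent {V : Type*} (d : ℕ) (G : SimpleGraph V) (p : V → Fin d → ℝ) : Prop :=
  LinearIndependent ℝ fun e : G.edgeSet => rigidityRow d p e.1

/-- The graph obtained from `G` by splitting `u'` from `u` along `C₁` (deleting `D₁`)
and then splitting `v'` from `v` along `C₂` (deleting `D₂`).  The new vertices are
`u' = Sum.inr 0` and `v' = Sum.inr 1`. -/
def doubleSplit {V : Type*} (G : SimpleGraph V) (u v : V) (C₁ D₁ C₂ D₂ : Set V) :
    SimpleGraph (V ⊕ Fin 2) :=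
  SimpleGraph.fromRel fun a b =>
    (∃ s t : V, a = Sum.inl s ∧ b = Sum.inl t ∧ G.Adj s t ∧
        ¬(s = u ∧ t ∈ D₁) ∧ ¬(t = u ∧ s ∈ D₁) ∧ ¬(s = v ∧ t ∈ D₂) ∧ ¬(t = v ∧ s ∈ D₂)) ∨
    (∃ z : V, a = Sum.inr 0 ∧ b = Sum.inl z ∧ (z ∈ C₁ ∪ D₁ ∨ z = u)) ∨
    (∃ z : V, a = Sum.inr 1 ∧ b = Sum.inl z ∧ (z ∈ C₂ ∪ D₂ ∨ z = v))

/-! ### Simplicial multicomplexes -/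

/-- The vertex set `V(S)` of a simplicial multicomplex. -/
def complexVerts {V : Type*} [DecidableEq V] (S : Multiset (Finset V)) : Finset V :=
  S.toFinset.sup id

/-- The edge set `E(S)`: all 2-element subsets of facets. -/
def complexEdges {V : Type*} [DecidableEq V] (S : Multiset (Finset V)) :
    Finset (Finset V) :=
  S.toFinset.biUnion fun F => Finset.powersetCard 2 F

/-- Adjacency in the graph `G(S)` of a simplicial multicomplex. -/
def complexAdj {V : Type*} (S : Multiset (Finset V)) (a b : V) : Prop :=
  a ≠ b ∧ ∃ F ∈ S, a ∈ F ∧ b ∈ F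

/-- The graph `G(S)` of a simplicial multicomplex. -/
def complexGraph {V : Type*} (S : Multiset (Finset V)) : SimpleGraph V :=
  SimpleGraph.fromRel fun a b => ∃ F ∈ S, a ∈ F ∧ b ∈ F

/-- A simplicial `k`-multicomplex: a multiset of `(k+1)`-element sets. -/
def IsMultiComplex {V : Type*} (k : ℕ) (S : Multiset (Finset V)) : Prop :=
  ∀ F ∈ S, F.card = k + 1

/-- `F` belongs to the boundary `∂S`: it is a `k`-set contained in an odd number of
facets of `S`, counted with multiplicity. -/
def inBoundary {V : Type*} [DecidableEq V] (k : ℕ) (S : Multiset (Finset V))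
    (F : Finset V) : Prop :=
  F.card = k ∧ (S.countP fun U => F ⊆ U) % 2 = 1

instance {V : Type*} [DecidableEq V] (k : ℕ) (S : Multiset (Finset V)) (F : Finset V) :
    Decidable (inBoundary k S F) :=
  inferInstanceAs (Decidable (_ ∧ _))

/-- A simplicial `k`-cycle: a `k`-multicomplex with empty boundary. -/
def IsSimplicialCycle {V : Type*} [DecidableEq V] (k : ℕ)
    (S : Multiset (Finset V)) : Prop :=
  IsMultiComplex k S ∧ ∀ F : Finset V, ¬ inBoundary k S F

/-- A simplicial `k`-circuit: a nonempty simplicial `k`-cycle, no nonempty proper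
sub-multiset of which is a simplicial `k`-cycle. -/
def IsSimplicialCircuit {V : Type*} [DecidableEq V] (k : ℕ)
    (S : Multiset (Finset V)) : Prop :=
  IsSimplicialCycle k S ∧ S ≠ 0 ∧
    ∀ T : Multiset (Finset V), T ≤ S → T ≠ 0 → T ≠ S → ¬ IsSimplicialCycle k T

/-- A trivial simplicial `k`-circuit: two copies of a single `(k+1)`-set. -/
def IsTrivialCircuit {V : Type*} (S : Multiset (Finset V)) : Prop :=
  ∃ F : Finset V, S = {F, F}

/-- The image multiset `T* = {F* : F ∈ T}` of a multicomplex under a vertex map. -/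
def starM {V W : Type*} [DecidableEq W] (f : V → W) (T : Multiset (Finset V)) :
    Multiset (Finset W) :=
  T.map (Finset.image f)

/-- `σ` is a free simplicial involution of the multicomplex `S`. -/
def IsFreeSimplicialInvolution {V : Type*} [DecidableEq V] (S : Multiset (Finset V))
    (σ : V → V) : Prop :=
  (∀ v ∈ complexVerts S, σ (σ v) = v) ∧ starM σ S = S ∧
    ∀ F : Finset V, F.Nonempty → (∃ U ∈ S, F ⊆ U) → F.image σ ≠ F

/-- A `ℤ₂`-symmetric `k`-cycle. -/
def IsZ2SymCycle {V : Type*} [DecidableEq V] (k : ℕ) (S : Multiset (Finset V))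
    (σ : V → V) : Prop :=
  IsSimplicialCycle k S ∧ IsFreeSimplicialInvolution S σ

/-- A `ℤ₂`-irreducible `k`-cycle: a nonempty `ℤ₂`-symmetric `k`-cycle, no nonempty
proper `σ`-invariant sub-multiset of which is a simplicial `k`-cycle. -/
def IsZ2IrreducibleCycle {V : Type*} [DecidableEq V] (k : ℕ) (S : Multiset (Finset V))
    (σ : V → V) : Prop :=
  IsZ2SymCycle k S σ ∧ S ≠ 0 ∧
    ∀ T : Multiset (Finset V), T ≤ S → T ≠ 0 → T ≠ S → starM σ T = T →
      ¬ IsSimplicialCycle k T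

/-- A trivial `ℤ₂`-irreducible `k`-cycle: two vertex-disjoint trivial simplicial
`k`-circuits interchanged by `σ`. -/
def IsTrivialZ2Irreducible {V : Type*} [DecidableEq V] (S : Multiset (Finset V))
    (σ : V → V) : Prop :=
  ∃ F : Finset V, S = {F, F, F.image σ, F.image σ} ∧ Disjoint F (F.image σ)

/-- The contraction `S/uv` of the multicomplex `S` (contracting `v` onto `u`). -/
def contractC {V : Type*} [DecidableEq V] (S : Multiset (Finset V)) (u v : V) :
    Multiset (Finset V) :=
  (S.filter fun U => ¬(u ∈ U ∧ v ∈ U)).map fun U =>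
    if v ∈ U then insert u (U.erase v) else U

/-- The canonical bijection `γ` from `Ast({x,y}) ∩ Ast({x*,y*})` to `(S/xy)/x*y*`,
as a map on facets. -/
def gammaFun {V : Type*} [DecidableEq V] (x y : V) (σ : V → V) (U : Finset V) :
    Finset V :=
  if y ∈ U then insert x (U.erase y)
  else if σ y ∈ U then insert (σ x) (U.erase (σ y)) else U

/-- `Ast({x,y}) ∩ Ast({x*,y*})`: the facets of `S` containing neither `{x,y}` nor
`{x*,y*}`. -/
def doubleAst {V : Type*} [DecidableEq V] (S : Multiset (Finset V)) (x y : V)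
    (σ : V → V) : Multiset (Finset V) :=
  S.filter fun U => ¬(x ∈ U ∧ y ∈ U) ∧ ¬(σ x ∈ U ∧ σ y ∈ U)

/-- `Sᵢ† = {K ⊆ V(Sᵢ) : |K| = k+1, {x,y} ⊆ K, K - x ∈ ∂Sᵢ, K - y ∈ ∂Sᵢ}`. -/
def fogDagger {V : Type*} [DecidableEq V] (k : ℕ) (Si : Multiset (Finset V))
    (x y : V) : Finset (Finset V) :=
  (complexVerts Si).powerset.filter fun K =>
    K.card = k + 1 ∧ x ∈ K ∧ y ∈ K ∧
      inBoundary k Si (K.erase x) ∧ inBoundary k Si (K.erase y)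

/-- `Sᵢ⁺ = Sᵢ ∪ Sᵢ† ∪ (Sᵢ†)*`. -/
def fogPlus {V : Type*} [DecidableEq V] (k : ℕ) (Si : Multiset (Finset V)) (x y : V)
    (σ : V → V) : Multiset (Finset V) :=
  Si ∪ (fogDagger k Si x y).val ∪ ((fogDagger k Si x y).image (Finset.image σ)).val

/-- The boundary complex `B_k` of the `(k+1)`-dimensional crosspolytope: its facets are
the transversals of the pairs `{(i,0),(i,1)}`. -/
def crossComplex (k : ℕ) : Multiset (Finset (Fin (k + 1) × Fin 2)) :=
  (Finset.univ : Finset (Fin (k + 1) → Fin 2)).val.map fun ε =>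
    Finset.univ.image fun i => (i, ε i)

/-- The graph `G(B_k)` of the `(k+1)`-dimensional crosspolytope: all pairs of vertices
are adjacent except antipodal ones. -/
def crossGraph (k : ℕ) : SimpleGraph (Fin (k + 1) × Fin 2) :=
  SimpleGraph.fromRel fun a b => a.1 ≠ b.1

/-- The antipodal vertex pairing of `G(B_k)`. -/
def antipode (k : ℕ) : Fin (k + 1) × Fin 2 → Fin (k + 1) × Fin 2 := fun a => (a.1, a.2 + 1)

/-- A `k`-pseudomanifold: a simplicial `k`-complex in which every `(k-1)`-face lies in
exactly two facets, and which is strongly connected. -/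
def IsPseudomanifold {V : Type*} [DecidableEq V] (k : ℕ)
    (S : Multiset (Finset V)) : Prop :=
  S.Nodup ∧ (∀ F ∈ S, F.card = k + 1) ∧
    (∀ F : Finset V, F.card = k → (∃ U ∈ S, F ⊆ U) →
      (S.countP fun U => F ⊆ U) = 2) ∧
    ∀ U ∈ S, ∀ W ∈ S,
      Relation.ReflTransGen (fun A B => A ∈ S ∧ B ∈ S ∧ (A ∩ B).card = k) U W

/-!
Any facet `F` and its antipode `F*` are disjoint, so `|V(S)| ≥ 2k+2`. In the case of equality
`V(S) = F ∪ F*`; since no facet contains an antipodal pair, every facet is then a transversal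
`(F \ A) ∪ A*` with `A ⊆ F`. The ridge obtained by deleting `v ∈ F \ A` from the transversal of
`A` lies in exactly two transversals, those of `A` and of `A ∪ {v}`, so the cycle condition forces
every transversal to occur with the multiplicity parity of `F`. If that parity is even,
`{F, F, F*, F*}` is a `σ`-invariant subcycle; if it is odd, so is the set of all `2^(k+1)`
transversals, which is a copy of `B_k`. By irreducibility `S` is this subcycle.
-/

namespace Multiset

theorem countP_eq_count_add_count {α : Type*} [DecidableEq α] {p : α → Prop}
    [DecidablePred p] {s : Multiset α} {a b : α} (hab : a ≠ b)
    (h : ∀ x ∈ s, p x ↔ x = a ∨ x = b) : s.countP p = s.count a + s.count b := by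
  induction s using Multiset.induction_on with
  | empty => simp
  | cons x s ih =>
    rw [countP_cons, count_cons, count_cons, ih fun y hy => h y (mem_cons_of_mem hy)]
    have hx := h x (mem_cons_self x s)
    by_cases hxa : x = a
    · subst hxa
      simp [hx.mpr (Or.inl rfl), hab.symm]
      omega
    · by_cases hxb : x = b
      · subst hxb
        simp [hx.mpr (Or.inr rfl), hab]
        omega
      · simp [hx, hxa, hxb, Ne.symm hxa, Ne.symm hxb]

theorem map_eq_of_nodup {α β : Type*} {s : Multiset α} {t : Multiset β} (f : β → α)
    (hs : s.Nodup) (hst : ∀ a ∈ s, ∃ b ∈ t, f b = a) (hcard : card t ≤ card s) :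
    t.map f = s :=
  (eq_of_le_of_card_le ((le_iff_subset hs).mpr fun a ha => by
    obtain ⟨b, hb, rfl⟩ := hst a ha
    exact mem_map_of_mem f hb) (by rwa [card_map])).symm

end Multiset

open Finset

section Complex

theorem starM_starM {V W X : Type*} [DecidableEq W] [DecidableEq X] (g : W → X) (f : V → W)
    (S : Multiset (Finset V)) : starM g (starM f S) = starM (g ∘ f) S := by
  simp only [starM, Multiset.map_map, Function.comp_def, image_image]

theorem starM_starM_of_leftInverse {V W : Type*} [DecidableEq V] [DecidableEq W] {f : V → W}
    {g : W → V} (hgf : Function.LeftInverse g f) (S : Multiset (Finset V)) :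
    starM g (starM f S) = S := by
  rw [starM_starM, hgf.comp_eq_id]
  simp [starM]

variable {V : Type*} [DecidableEq V]

theorem mem_complexVerts {S : Multiset (Finset V)} {v : V} :
    v ∈ complexVerts S ↔ ∃ U ∈ S, v ∈ U := by
  simp [complexVerts, Finset.mem_sup]

theorem subset_complexVerts {S : Multiset (Finset V)} {U : Finset V} (hU : U ∈ S) :
    U ⊆ complexVerts S := fun _ hv => mem_complexVerts.mpr ⟨U, hU, hv⟩

theorem complexVerts_starM {W : Type*} [DecidableEq W] (f : V → W) (S : Multiset (Finset V)) :
    complexVerts (starM f S) = (complexVerts S).image f := by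
  ext w
  simp only [mem_complexVerts, starM, Multiset.mem_map, mem_image]
  constructor
  · rintro ⟨_, ⟨U, hU, rfl⟩, hw⟩
    obtain ⟨v, hv, rfl⟩ := mem_image.mp hw
    exact ⟨v, ⟨U, hU, hv⟩, rfl⟩
  · rintro ⟨v, ⟨U, hU, hv⟩, rfl⟩
    exact ⟨_, ⟨U, hU, rfl⟩, mem_image_of_mem f hv⟩

theorem card_complexVerts_crossComplex (k : ℕ) :
    (complexVerts (crossComplex k)).card = 2 * k + 2 := by
  have : complexVerts (crossComplex k) = univ := eq_univ_of_forall fun ⟨i, b⟩ =>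
    mem_complexVerts.mpr ⟨_, Multiset.mem_map_of_mem _ (mem_val.mpr (mem_univ fun _ => b)),
      mem_image_of_mem _ (mem_univ i)⟩
  rw [this, card_univ, Fintype.card_prod, Fintype.card_fin, Fintype.card_fin]
  ring

theorem exists_injOn_starM_eq {W : Type*} [DecidableEq W] [Nonempty W] {φ : W → V}
    (hφ : Function.Injective φ) (B : Multiset (Finset W)) :
    ∃ f : V → W, Set.InjOn f (Set.range φ) ∧ starM f (starM φ B) = B := by
  refine ⟨Function.invFun φ, fun x hx y hy hxy => ?_,
    starM_starM_of_leftInverse (Function.leftInverse_invFun hφ) B⟩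
  rw [← Function.invFun_eq hx, hxy, Function.invFun_eq hy]

end Complex

section Transversal

variable {V : Type*} [DecidableEq V] {σ : V → V} {F A B : Finset V} {v : V}

def transversal (σ : V → V) (F A : Finset V) : Finset V := (F \ A) ∪ A.image σ

theorem transversal_empty : transversal σ F ∅ = F := by simp [transversal]

theorem transversal_self : transversal σ F F = F.image σ := by simp [transversal]

theorem sigma_notMem_of_disjoint (hF : Disjoint F (F.image σ)) (hv : v ∈ F) : σ v ∉ F :=
  fun h => disjoint_left.mp hF h (mem_image_of_mem σ hv)

theorem mem_transversal (hF : Disjoint F (F.image σ)) (hA : A ⊆ F) (hv : v ∈ F) :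
    v ∈ transversal σ F A ↔ v ∉ A := by
  simp only [transversal, mem_union, mem_sdiff, mem_image]
  constructor
  · rintro (⟨-, h⟩ | ⟨a, ha, rfl⟩)
    · exact h
    · exact absurd hv (sigma_notMem_of_disjoint hF (hA ha))
  · exact fun h => Or.inl ⟨hv, h⟩

theorem sigma_mem_transversal (hσ : ∀ v ∈ F, σ (σ v) = v) (hF : Disjoint F (F.image σ))
    (hA : A ⊆ F) (hv : v ∈ F) : σ v ∈ transversal σ F A ↔ v ∈ A := by
  simp only [transversal, mem_union, mem_sdiff, mem_image]
  constructor
  · rintro (⟨h, -⟩ | ⟨a, ha, h⟩)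
    · exact absurd h (sigma_notMem_of_disjoint hF hv)
    · rwa [← hσ a (hA ha), h, hσ v hv] at ha
  · exact fun h => Or.inr ⟨v, h, rfl⟩

theorem transversal_inj (hσ : ∀ v ∈ F, σ (σ v) = v) (hF : Disjoint F (F.image σ))
    (hA : A ⊆ F) (hB : B ⊆ F) : transversal σ F A = transversal σ F B ↔ A = B := by
  refine ⟨fun h => ?_, fun h => h ▸ rfl⟩
  ext v
  constructor <;> intro hv
  · rwa [← sigma_mem_transversal hσ hF hB (hA hv), ← h,
      sigma_mem_transversal hσ hF hA (hA hv)]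
  · rwa [← sigma_mem_transversal hσ hF hA (hB hv), h,
      sigma_mem_transversal hσ hF hB (hB hv)]

theorem card_transversal (hσ : ∀ v ∈ F, σ (σ v) = v) (hF : Disjoint F (F.image σ))
    (hA : A ⊆ F) : (transversal σ F A).card = F.card := by
  have hinj : Set.InjOn σ A := fun a ha b hb h => by
    rw [← hσ a (hA ha), h, hσ b (hA hb)]
  rw [transversal, card_union_of_disjoint (hF.mono sdiff_subset (image_subset_image hA)),
    card_sdiff_of_subset hA, card_image_of_injOn hinj]
  have := card_le_card hA
  omega

theorem transversal_insert (hF : Disjoint F (F.image σ)) (hA : A ⊆ F) (hv : v ∈ F) :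
    transversal σ F (insert v A) = insert (σ v) ((transversal σ F A).erase v) := by
  have hσA : ∀ a ∈ A, σ a ≠ v := fun a ha h => sigma_notMem_of_disjoint hF (hA ha) (h ▸ hv)
  ext y
  simp only [transversal, mem_insert, mem_erase, mem_union, mem_sdiff, image_insert, mem_image,
    not_or]
  constructor
  · rintro (⟨hy, hyv, hyA⟩ | rfl | ⟨a, ha, rfl⟩)
    · exact Or.inr ⟨hyv, Or.inl ⟨hy, hyA⟩⟩
    · exact Or.inl rfl
    · exact Or.inr ⟨hσA a ha, Or.inr ⟨a, ha, rfl⟩⟩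
  · rintro (rfl | ⟨hyv, ⟨hy, hyA⟩ | ⟨a, ha, rfl⟩⟩)
    · exact Or.inr (Or.inl rfl)
    · exact Or.inl ⟨hy, hyv, hyA⟩
    · exact Or.inr (Or.inr ⟨a, ha, rfl⟩)

theorem image_transversal (hσ : ∀ v ∈ F, σ (σ v) = v) (hA : A ⊆ F) :
    (transversal σ F A).image σ = transversal σ F (F \ A) := by
  have hAA : (A.image σ).image σ = A := by
    rw [image_image]
    exact (image_congr fun a ha => hσ a (hA ha)).trans image_id
  rw [transversal, transversal, image_union, hAA, Finset.sdiff_sdiff_eq_self hA, union_comm]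

theorem eq_transversal_filter (hσ : ∀ v ∈ F, σ (σ v) = v) (hF : Disjoint F (F.image σ))
    {W : Finset V} (hWF : W ⊆ F ∪ F.image σ) (hcard : W.card = F.card)
    (hW : ∀ v ∈ W, σ v ∉ W) : W = transversal σ F (F.filter (σ · ∈ W)) := by
  refine eq_of_subset_of_card_le (fun x hx => ?_)
    (by rw [card_transversal hσ hF (filter_subset _ _), hcard])
  rcases mem_union.mp (hWF hx) with hxF | hxσ
  · exact mem_union_left _ (mem_sdiff.mpr ⟨hxF, fun h => hW x hx (mem_filter.mp h).2⟩)
  · obtain ⟨w, hw, rfl⟩ := mem_image.mp hxσ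
    exact mem_union_right _ (mem_image_of_mem σ (mem_filter.mpr ⟨hw, hx⟩))

theorem erase_transversal_subset_iff (hσ : ∀ v ∈ F, σ (σ v) = v) (hF : Disjoint F (F.image σ))
    (hA : A ⊆ F) (hB : B ⊆ F) (hv : v ∈ F) (hvA : v ∉ A) :
    (transversal σ F A).erase v ⊆ transversal σ F B ↔ B = A ∨ B = insert v A := by
  constructor
  · intro h
    have hBA : B.erase v = A := by
      ext w
      rw [mem_erase]
      constructor
      · rintro ⟨hwv, hwB⟩
        by_contra hwA
        have hw := h (mem_erase.mpr ⟨hwv, (mem_transversal hF hA (hB hwB)).mpr hwA⟩)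
        exact (mem_transversal hF hB (hB hwB)).mp hw hwB
      · intro hwA
        have hσw : σ w ≠ v := fun h' => sigma_notMem_of_disjoint hF (hA hwA) (h' ▸ hv)
        refine ⟨ne_of_mem_of_not_mem hwA hvA, (sigma_mem_transversal hσ hF hB (hA hwA)).mp
          (h (mem_erase.mpr ⟨hσw, (sigma_mem_transversal hσ hF hA (hA hwA)).mpr hwA⟩))⟩
    by_cases hvB : v ∈ B
    · exact Or.inr (by rw [← hBA, insert_erase hvB])
    · exact Or.inl (by rw [← hBA, erase_eq_of_notMem hvB])
  · rintro (rfl | rfl)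
    · exact erase_subset _ _
    · rw [transversal_insert hF hA hv]
      exact subset_insert _ _

theorem exists_eq_erase_transversal (hσ : ∀ v ∈ F, σ (σ v) = v) (hF : Disjoint F (F.image σ))
    (hB : B ⊆ F) {K : Finset V} (hK : K ⊆ transversal σ F B) (hcard : K.card + 1 = F.card) :
    ∃ A ⊆ F, ∃ v ∈ F, v ∉ A ∧ K = (transversal σ F A).erase v := by
  obtain ⟨x, hxK, hx⟩ :=
    exists_eq_insert_iff.mpr ⟨hK, by rw [card_transversal hσ hF hB, hcard]⟩
  have hKx : K = (transversal σ F B).erase x := by rw [← hx, erase_insert hxK]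
  rcases mem_union.mp (hx ▸ mem_insert_self x K) with hxB | hxB
  · obtain ⟨hxF, hxB⟩ := mem_sdiff.mp hxB
    exact ⟨B, hB, x, hxF, hxB, hKx⟩
  · obtain ⟨w, hwB, rfl⟩ := mem_image.mp hxB
    have hA : B.erase w ⊆ F := (erase_subset _ _).trans hB
    have hσw : σ w ∉ (transversal σ F (B.erase w)).erase w := fun h =>
      notMem_erase w B ((sigma_mem_transversal hσ hF hA (hB hwB)).mp (mem_of_mem_erase h))
    refine ⟨B.erase w, hA, w, hB hwB, notMem_erase w B, ?_⟩
    rw [hKx, ← erase_insert hσw, ← transversal_insert hF hA (hB hwB), insert_erase hwB]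

theorem countP_erase_transversal_subset (hσ : ∀ v ∈ F, σ (σ v) = v)
    (hF : Disjoint F (F.image σ)) {T : Multiset (Finset V)}
    (hT : ∀ W ∈ T, ∃ B ⊆ F, W = transversal σ F B) (hA : A ⊆ F) (hv : v ∈ F) (hvA : v ∉ A) :
    T.countP ((transversal σ F A).erase v ⊆ ·) =
      T.count (transversal σ F A) + T.count (transversal σ F (insert v A)) := by
  have hvA' : insert v A ⊆ F := insert_subset hv hA
  refine Multiset.countP_eq_count_add_count (fun h => ?_) fun W hW => ?_
  · exact hvA ((transversal_inj hσ hF hA hvA').mp h ▸ mem_insert_self v A)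
  · obtain ⟨B, hB, rfl⟩ := hT W hW
    rw [erase_transversal_subset_iff hσ hF hA hB hv hvA, transversal_inj hσ hF hB hA,
      transversal_inj hσ hF hB hvA']

theorem isSimplicialCycle_of_transversals (hσ : ∀ v ∈ F, σ (σ v) = v)
    (hF : Disjoint F (F.image σ)) {k : ℕ} (hcard : F.card = k + 1) {T : Multiset (Finset V)}
    (hT : ∀ W ∈ T, ∃ B ⊆ F, W = transversal σ F B)
    (hpar : ∀ A ⊆ F, ∀ v ∈ F, v ∉ A →
      T.count (transversal σ F A) % 2 = T.count (transversal σ F (insert v A)) % 2) :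
    IsSimplicialCycle k T := by
  refine ⟨fun W hW => ?_, fun K ⟨hK, hodd⟩ => ?_⟩
  · obtain ⟨B, hB, rfl⟩ := hT W hW
    rw [card_transversal hσ hF hB, hcard]
  · obtain ⟨W, hW, hKW⟩ := Multiset.countP_pos.mp (by omega : 0 < T.countP (K ⊆ ·))
    obtain ⟨B, hB, rfl⟩ := hT W hW
    obtain ⟨A, hA, v, hv, hvA, rfl⟩ := exists_eq_erase_transversal hσ hF hB hKW (by omega)
    rw [countP_erase_transversal_subset hσ hF hT hA hv hvA] at hodd
    have := hpar A hA v hv hvA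
    omega

theorem count_transversal_mod_two (hσ : ∀ v ∈ F, σ (σ v) = v) (hF : Disjoint F (F.image σ))
    {k : ℕ} (hcard : F.card = k + 1) {T : Multiset (Finset V)}
    (hT : ∀ W ∈ T, ∃ B ⊆ F, W = transversal σ F B) (hbd : ∀ K, ¬ inBoundary k T K) :
    ∀ A ⊆ F, T.count (transversal σ F A) % 2 = T.count F % 2 := by
  intro A
  induction A using Finset.induction_on with
  | empty => intro _; rw [transversal_empty]
  | @insert v A hvA ih =>
    intro hvA'
    have hA : A ⊆ F := (subset_insert v A).trans hvA'
    have hv : v ∈ F := hvA' (mem_insert_self v A)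
    have hface := hbd ((transversal σ F A).erase v)
    rw [inBoundary, card_erase_of_mem ((mem_transversal hF hA hv).mpr hvA),
      card_transversal hσ hF hA, hcard,
      countP_erase_transversal_subset hσ hF hT hA hv hvA] at hface
    have := ih hA
    omega

end Transversal

section CrossPolytope

variable {V ι : Type*} {σ : V → V} {F : Finset V}

def crossLabel (σ : V → V) (e : ι ≃ F) (a : ι × Fin 2) : V :=
  if a.2 = 0 then e a.1 else σ (e a.1)

theorem crossLabel_zero (e : ι ≃ F) (i : ι) : crossLabel σ e (i, 0) = e i := if_pos rfl

theorem crossLabel_one (e : ι ≃ F) (i : ι) : crossLabel σ e (i, 1) = σ (e i) :=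
  if_neg (show (1 : Fin 2) ≠ 0 by decide)

variable [DecidableEq V]

def signSet [Fintype ι] (e : ι ≃ F) (ε : ι → Fin 2) : Finset V :=
  (univ.filter (ε · = 1)).image fun i => (e i : V)

theorem mem_signSet [Fintype ι] (e : ι ≃ F) (ε : ι → Fin 2) (i : ι) :
    (e i : V) ∈ signSet e ε ↔ ε i = 1 := by
  simp only [signSet, mem_image, mem_filter, mem_univ, true_and]
  exact ⟨fun ⟨j, hj, hji⟩ => e.injective (Subtype.ext hji) ▸ hj, fun h => ⟨i, h, rfl⟩⟩

theorem crossLabel_injective (hσ : ∀ v ∈ F, σ (σ v) = v) (hF : Disjoint F (F.image σ))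
    (e : ι ≃ F) : Function.Injective (crossLabel σ e) := by
  have he : ∀ i j, (e i : V) = e j → i = j := fun i j h => e.injective (Subtype.ext h)
  rintro ⟨i, b⟩ ⟨j, c⟩ h
  rcases (by omega : b = 0 ∨ b = 1) with rfl | rfl <;>
    rcases (by omega : c = 0 ∨ c = 1) with rfl | rfl <;>
    simp only [crossLabel_zero, crossLabel_one] at h
  · rw [he i j h]
  · exact absurd (h ▸ (e i).2) (sigma_notMem_of_disjoint hF (e j).2)
  · exact absurd (h ▸ (e j).2) (sigma_notMem_of_disjoint hF (e i).2)
  · rw [he i j (by rw [← hσ _ (e i).2, h, hσ _ (e j).2])]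

theorem range_crossLabel (e : ι ≃ F) : Set.range (crossLabel σ e) = ↑(F ∪ F.image σ) := by
  ext y
  simp only [Set.mem_range, coe_union, coe_image, Set.mem_union, mem_coe, Set.mem_image]
  constructor
  · rintro ⟨⟨i, b⟩, rfl⟩
    rcases (by omega : b = 0 ∨ b = 1) with rfl | rfl
    · exact Or.inl (crossLabel_zero e i ▸ (e i).2)
    · exact Or.inr ⟨e i, (e i).2, (crossLabel_one e i).symm⟩
  · rintro (hy | ⟨w, hw, rfl⟩)
    · exact ⟨(e.symm ⟨y, hy⟩, 0), by rw [crossLabel_zero, e.apply_symm_apply]⟩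
    · exact ⟨(e.symm ⟨w, hw⟩, 1), by rw [crossLabel_one, e.apply_symm_apply]⟩

theorem image_crossLabel_graph [Fintype ι] [DecidableEq ι] (e : ι ≃ F) (ε : ι → Fin 2) :
    (univ.image fun i => (i, ε i)).image (crossLabel σ e) = transversal σ F (signSet e ε) := by
  ext x
  simp only [image_image, mem_image, mem_univ, true_and, Function.comp_def, transversal,
    mem_union, mem_sdiff]
  constructor
  · rintro ⟨i, rfl⟩
    rcases (by omega : ε i = 0 ∨ ε i = 1) with h | h <;> rw [h]
    · refine Or.inl ⟨crossLabel_zero e i ▸ (e i).2, ?_⟩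
      rw [crossLabel_zero, mem_signSet, h]
      decide
    · exact Or.inr ⟨e i, (mem_signSet e ε i).mpr h, (crossLabel_one e i).symm⟩
  · rintro (⟨hx, hxA⟩ | ⟨a, ha, rfl⟩)
    · refine ⟨e.symm ⟨x, hx⟩, ?_⟩
      set i := e.symm ⟨x, hx⟩
      have hε : ε i = 0 := by
        refine (by omega : ε i = 0 ∨ ε i = 1).resolve_right fun h => hxA ?_
        simpa [i] using (mem_signSet e ε i).mpr h
      rw [hε, crossLabel_zero, e.apply_symm_apply]
    · obtain ⟨i, hi, rfl⟩ := mem_image.mp ha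
      exact ⟨i, by rw [(mem_filter.mp hi).2, crossLabel_one]⟩

theorem map_signSet_univ [Fintype ι] [DecidableEq ι] (e : ι ≃ F) :
    (univ.val : Multiset (ι → Fin 2)).map (signSet e) = F.powerset.val := by
  refine Multiset.map_eq_of_nodup _ F.powerset.nodup (fun B hB => ?_) ?_
  · have hBF := mem_powerset.mp (mem_val.mp hB)
    refine ⟨fun i => if (e i : V) ∈ B then 1 else 0, mem_univ _, ?_⟩
    ext v
    constructor
    · intro hv
      obtain ⟨i, hi, rfl⟩ := mem_image.mp hv
      by_contra hiB
      simp [hiB] at hi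
    · intro hv
      simpa [hv] using (mem_signSet e (fun i => if (e i : V) ∈ B then 1 else 0)
        (e.symm ⟨v, hBF hv⟩)).mpr
  · simp [Fintype.card_congr e]

theorem starM_crossLabel_crossComplex {k : ℕ} (e : Fin (k + 1) ≃ F) :
    starM (crossLabel σ e) (crossComplex k) = F.powerset.val.map (transversal σ F) := by
  rw [crossComplex, starM, Multiset.map_map, ← map_signSet_univ e, Multiset.map_map]
  exact Multiset.map_congr rfl fun ε _ => image_crossLabel_graph e ε

end CrossPolytope

namespace IsFreeSimplicialInvolution

variable {V : Type*} [DecidableEq V] {S : Multiset (Finset V)} {σ : V → V} {U : Finset V}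

theorem sigma_notMem (h : IsFreeSimplicialInvolution S σ) (hU : U ∈ S) {u : V} (hu : u ∈ U) :
    σ u ∉ U := by
  intro hσu
  refine h.2.2 {u, σ u} (insert_nonempty _ _) ⟨U, hU, insert_subset hu (by simpa)⟩ ?_
  rw [image_insert, image_singleton, h.1 u (subset_complexVerts hU hu), pair_comm]

theorem image_mem (h : IsFreeSimplicialInvolution S σ) (hU : U ∈ S) : U.image σ ∈ S :=
  h.2.1 ▸ Multiset.mem_map_of_mem _ hU

theorem sigma_sigma (h : IsFreeSimplicialInvolution S σ) (hU : U ∈ S) :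
    ∀ v ∈ U, σ (σ v) = v := fun v hv => h.1 v (subset_complexVerts hU hv)

theorem image_image_self (h : IsFreeSimplicialInvolution S σ) (hU : U ∈ S) :
    (U.image σ).image σ = U := by
  rw [image_image]
  exact (image_congr fun v hv => h.sigma_sigma hU v hv).trans image_id

theorem disjoint_image (h : IsFreeSimplicialInvolution S σ) (hU : U ∈ S) :
    Disjoint U (U.image σ) := by
  refine disjoint_left.mpr fun v hv hσv => ?_
  obtain ⟨w, hw, rfl⟩ := mem_image.mp hσv
  exact h.sigma_notMem hU hw hv

theorem card_union_image (h : IsFreeSimplicialInvolution S σ) (hU : U ∈ S) :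
    (U ∪ U.image σ).card = 2 * U.card := by
  rw [card_union_of_disjoint (h.disjoint_image hU),
    card_image_of_injOn fun a ha b hb hab => by
      rw [← h.sigma_sigma hU a ha, hab, h.sigma_sigma hU b hb]]
  ring

theorem union_image_subset (h : IsFreeSimplicialInvolution S σ) (hU : U ∈ S) :
    U ∪ U.image σ ⊆ complexVerts S :=
  union_subset (subset_complexVerts hU) (subset_complexVerts (h.image_mem hU))

theorem exists_transversal (h : IsFreeSimplicialInvolution S σ) {k : ℕ}
    (hS : IsMultiComplex k S) {F : Finset V} (hF : F ∈ S)
    (hV : complexVerts S = F ∪ F.image σ) : ∀ W ∈ S, ∃ B ⊆ F, W = transversal σ F B :=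
  fun W hW => ⟨_, filter_subset _ _, eq_transversal_filter (h.sigma_sigma hF)
    (h.disjoint_image hF) (hV ▸ subset_complexVerts hW) (by rw [hS W hW, hS F hF])
    fun _ => h.sigma_notMem hW⟩

end IsFreeSimplicialInvolution

namespace IsZ2IrreducibleCycle

variable {V : Type*} [DecidableEq V] {k : ℕ} {S : Multiset (Finset V)} {σ : V → V}
  {F : Finset V}

theorem eq_of_le (h : IsZ2IrreducibleCycle k S σ) {T : Multiset (Finset V)} (hTS : T ≤ S)
    (hT0 : T ≠ 0) (hTσ : starM σ T = T) (hT : IsSimplicialCycle k T) : T = S :=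
  by_contra fun hne => h.2.2 T hTS hT0 hne hTσ hT

theorem count_transversal_mod_two (h : IsZ2IrreducibleCycle k S σ) (hF : F ∈ S)
    (hV : complexVerts S = F ∪ F.image σ) :
    ∀ A ⊆ F, S.count (transversal σ F A) % 2 = S.count F % 2 :=
  _root_.count_transversal_mod_two (h.1.2.sigma_sigma hF) (h.1.2.disjoint_image hF)
    (h.1.1.1 F hF) (h.1.2.exists_transversal h.1.1.1 hF hV) h.1.1.2

theorem isTrivialZ2Irreducible_of_even (h : IsZ2IrreducibleCycle k S σ) (hF : F ∈ S)
    (heven : S.count F % 2 = 0) (heven' : S.count (F.image σ) % 2 = 0) :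
    IsTrivialZ2Irreducible S σ := by
  have hσ := h.1.2
  have hF' := hσ.image_mem hF
  have hne : F ≠ F.image σ := fun hFF => by
    have hdisj := hσ.disjoint_image hF
    rw [← hFF, disjoint_self, bot_eq_empty] at hdisj
    simpa [hdisj] using h.1.1.1 F hF
  have h2 : 2 ≤ S.count F := by have := Multiset.count_pos.mpr hF; omega
  have h2' : 2 ≤ S.count (F.image σ) := by have := Multiset.count_pos.mpr hF'; omega
  set T : Multiset (Finset V) := {F, F, F.image σ, F.image σ}
  have hTS : T ≤ S := by
    rw [Multiset.le_iff_count]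
    intro G
    by_cases hG : G = F
    · subst hG
      simp [T, hne]
      omega
    · by_cases hG' : G = F.image σ
      · subst hG'
        simp [T, hG]
        omega
      · simp [T, hG, hG']
  have hTσ : starM σ T = T := by
    simp only [T, starM, Multiset.insert_eq_cons, Multiset.map_cons, Multiset.map_singleton,
      hσ.image_image_self hF]
    ext G
    simp only [Multiset.count_cons, Multiset.count_singleton]
    omega
  have hTcycle : IsSimplicialCycle k T := by
    refine ⟨fun W hW => ?_, fun K ⟨_, hK⟩ => ?_⟩
    · simp only [T, Multiset.insert_eq_cons, Multiset.mem_cons, Multiset.mem_singleton] at hW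
      rcases hW with rfl | rfl | rfl | rfl <;> exact h.1.1.1 _ ‹_›
    · simp only [T, Multiset.insert_eq_cons, Multiset.countP_cons, ← Multiset.cons_zero,
        Multiset.countP_zero] at hK
      split_ifs at hK
  exact ⟨F, (h.eq_of_le hTS (by simp [T]) hTσ hTcycle).symm, hσ.disjoint_image hF⟩

theorem map_transversal_eq_of_odd (h : IsZ2IrreducibleCycle k S σ) (hF : F ∈ S)
    (hV : complexVerts S = F ∪ F.image σ) (hodd : S.count F % 2 = 1) :
    F.powerset.val.map (transversal σ F) = S := by
  have hinv := h.1.2.sigma_sigma hF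
  have hdisj := h.1.2.disjoint_image hF
  set N := F.powerset.val.map (transversal σ F)
  have hNnodup : N.Nodup := F.powerset.nodup.map_on fun A hA B hB hAB =>
    (transversal_inj hinv hdisj (mem_powerset.mp hA) (mem_powerset.mp hB)).mp hAB
  have hNT : ∀ W ∈ N, ∃ B ⊆ F, W = transversal σ F B := by
    simp [N, eq_comm]
  have hNcount : ∀ A ⊆ F, N.count (transversal σ F A) = 1 := fun A hA =>
    Multiset.count_eq_one_of_mem hNnodup
      (Multiset.mem_map_of_mem _ (mem_val.mpr (mem_powerset.mpr hA)))
  have hNS : N ≤ S := (Multiset.le_iff_subset hNnodup).mpr fun W hW => by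
    obtain ⟨B, hB, rfl⟩ := hNT W hW
    exact Multiset.count_pos.mp (by have := h.count_transversal_mod_two hF hV B hB; omega)
  have hNσ : starM σ N = N := by
    refine Multiset.map_eq_of_nodup _ hNnodup (fun W hW => ?_) (by simp [N])
    obtain ⟨B, hB, rfl⟩ := hNT W hW
    refine ⟨transversal σ F (F \ B), Multiset.mem_map_of_mem _ ?_, ?_⟩
    · exact mem_val.mpr (mem_powerset.mpr sdiff_subset)
    · rw [image_transversal hinv sdiff_subset, Finset.sdiff_sdiff_eq_self hB]
  have hNcycle : IsSimplicialCycle k N :=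
    isSimplicialCycle_of_transversals hinv hdisj (h.1.1.1 F hF) hNT fun A hA v hv _ => by
      rw [hNcount A hA, hNcount _ (insert_subset hv hA)]
  exact h.eq_of_le hNS (by simp [N, (powerset_nonempty F).ne_empty]) hNσ hNcycle

theorem exists_iso_crossComplex_of_odd (h : IsZ2IrreducibleCycle k S σ) (hF : F ∈ S)
    (hV : complexVerts S = F ∪ F.image σ) (hodd : S.count F % 2 = 1) :
    ∃ f : V → Fin (k + 1) × Fin 2,
      Set.InjOn f ↑(complexVerts S) ∧ starM f S = crossComplex k := by
  have hcard : Fintype.card F = k + 1 := by rw [Fintype.card_coe, h.1.1.1 F hF]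
  set e : Fin (k + 1) ≃ F := (Fintype.equivFinOfCardEq hcard).symm
  obtain ⟨f, hf, hfS⟩ := exists_injOn_starM_eq
    (crossLabel_injective (h.1.2.sigma_sigma hF) (h.1.2.disjoint_image hF) e) (crossComplex k)
  refine ⟨f, ?_, ?_⟩
  · rwa [hV, ← range_crossLabel e]
  · rwa [starM_crossLabel_crossComplex e, h.map_transversal_eq_of_odd hF hV hodd] at hfS

end IsZ2IrreducibleCycle

theorem statement10_general {V : Type*} [DecidableEq V] (k : ℕ)
    (S : Multiset (Finset V)) (σ : V → V) (h : IsZ2IrreducibleCycle k S σ) :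
    2 * k + 2 ≤ (complexVerts S).card ∧
      ((complexVerts S).card = 2 * k + 2 ↔
        IsTrivialZ2Irreducible S σ ∨
          ∃ f : V → Fin (k + 1) × Fin 2,
            Set.InjOn f ↑(complexVerts S) ∧ starM f S = crossComplex k) := by
  obtain ⟨F, hF⟩ := Multiset.exists_mem_of_ne_zero h.2.1
  have hσ := h.1.2
  have hsub := hσ.union_image_subset hF
  have hcard : (F ∪ F.image σ).card = 2 * k + 2 := by
    rw [hσ.card_union_image hF, h.1.1.1 F hF]
    ring
  refine ⟨hcard ▸ card_le_card hsub, fun hV => ?_, ?_⟩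
  · have hVF : complexVerts S = F ∪ F.image σ := (eq_of_subset_of_card_le hsub (by omega)).symm
    rcases Nat.mod_two_eq_zero_or_one (S.count F) with heven | hodd
    · have hpar := h.count_transversal_mod_two hF hVF F subset_rfl
      rw [transversal_self] at hpar
      exact Or.inl (h.isTrivialZ2Irreducible_of_even hF heven (hpar.trans heven))
    · exact Or.inr (h.exists_iso_crossComplex_of_odd hF hVF hodd)
  · rintro (⟨G, rfl, -⟩ | ⟨f, hf, hfS⟩)
    · have hG : G ∈ ({G, G, G.image σ, G.image σ} : Multiset (Finset V)) := by simp
      rw [show complexVerts {G, G, G.image σ, G.image σ} = G ∪ G.image σ by simp [complexVerts],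
        hσ.card_union_image hG, h.1.1.1 G hG]
      ring
    · rw [← card_image_of_injOn hf, ← complexVerts_starM, hfS, card_complexVerts_crossComplex]

/-- Minimum number of vertices of a `ℤ₂`-irreducible `k`-cycle. -/
theorem statement10 {V : Type*} [DecidableEq V] (k : ℕ) (hk : 1 ≤ k)
    (S : Multiset (Finset V)) (σ : V → V) (h : IsZ2IrreducibleCycle k S σ) :
    2 * k + 2 ≤ (complexVerts S).card ∧
      ((complexVerts S).card = 2 * k + 2 ↔
        IsTrivialZ2Irreducible S σ ∨
          ∃ f : V → Fin (k + 1) × Fin 2,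
            Set.InjOn f ↑(complexVerts S) ∧ starM f S = crossComplex k) :=
  statement10_general k S σ h
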